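/- Let H_A and H_B be finite-dimensional, let N be a quantum channel on H_A ⊗ H_B, and let ξ_1 = |ν_1⟩⟨ν_1|, ξ_2 = |ν_2⟩⟨ν_2| be pure states on H_B with ⟨ν_1|ν_2⟩ ≠ 0. Define channels N_{A,i}(ρ) = Tr_B[N(ρ ⊗ ξ_i)] for i = 1, 2. If both N_{A,1} and N_{A,2} are unitary channels, then N_{A,1} = N_{A,2}. -/

import Mathlib

open Matrix BigOperators
open scoped Kronecker ComplexOrder

noncomputable section

/-- Partial trace over the second tensor factor. -/
def ptraceB {a b : Type*} [Fintype b] (M : Matrix (a × b) (a × b) ℂ) : Matrix a a ℂ :=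
  Matrix.of fun i j => ∑ k, M (i, k) (j, k)

/-- Partial trace over the first tensor factor. -/
def ptraceA {a b : Type*} [Fintype a] (M : Matrix (a × b) (a × b) ℂ) : Matrix b b ℂ :=
  Matrix.of fun i j => ∑ k, M (k, i) (k, j)

/-- A quantum state: positive semidefinite with trace one. -/
def IsState {m : Type*} [Fintype m] (ρ : Matrix m m ℂ) : Prop :=
  ρ.PosSemidef ∧ ρ.trace = 1

/-- A quantum channel: trace-preserving and completely positive (Kraus form). -/
def IsCPTP {m : Type*} [Fintype m] (Φ : Matrix m m ℂ →ₗ[ℂ] Matrix m m ℂ) : Prop :=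
  (∀ X, (Φ X).trace = X.trace) ∧
  ∃ (k : ℕ) (K : Fin k → Matrix m m ℂ), ∀ X, Φ X = ∑ i, K i * X * (K i)ᴴ

def IsUnitary {m : Type*} [Fintype m] [DecidableEq m] (U : Matrix m m ℂ) : Prop :=
  U * Uᴴ = 1 ∧ Uᴴ * U = 1

/-!
Write `N` in Kraus form `ρ ↦ ∑ₜ Kₜ ρ Kₜ*`. Then `ρ ↦ Tr_B[N(ρ ⊗ |ν⟩⟨μ|)]` equals
`ρ ↦ ∑_{t,β} A_{t,β}(ν) ρ A_{t,β}(μ)*` with `A_{t,β}(ν) = (1 ⊗ ⟨β|) Kₜ (1 ⊗ |ν⟩)`.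
Every Kraus operator of a unitary channel `ρ ↦ U ρ U*` is a multiple of `U`, so
`A_{t,β}(νᵢ) = c^{(i)}_{t,β} Uᵢ`. Trace preservation on the cross term `ρ ⊗ |ν₂⟩⟨ν₁|` then gives
`s · Tr(U₁* U₂ ρ) = ⟨ν₁|ν₂⟩ · Tr ρ` for all `ρ`, where `s = ∑ conj(c⁽¹⁾) c⁽²⁾`. As `⟨ν₁|ν₂⟩ ≠ 0`,
`U₁* U₂` is a scalar, i.e. `U₂` is a phase times `U₁`, and the two channels coincide.
-/

namespace Matrix

variable {n ι : Type*} [Fintype n] [Fintype ι]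

lemma dotProduct_eq_zero_of_sum_vecMulVec_eq {w : ι → n → ℂ} {x y : n → ℂ}
    (h : ∑ s, vecMulVec (w s) (star (w s)) = vecMulVec x (star x)) (hxy : star y ⬝ᵥ x = 0)
    (s : ι) : star y ⬝ᵥ w s = 0 := by
  set u : ι → ℂ := fun s => star y ⬝ᵥ w s
  have hu : star u ⬝ᵥ u = 0 := by
    have := congrArg (fun M => star y ⬝ᵥ (M *ᵥ y)) h
    simp only [sum_mulVec, vecMulVec_mulVec, dotProduct_sum, dotProduct_smul, hxy] at this
    simpa [u, dotProduct, mul_comm, ← star_dotProduct_star] using this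
  exact congrFun (dotProduct_star_self_eq_zero.mp hu) s

lemma exists_eq_smul_of_forall_dotProduct_eq_zero {x w : n → ℂ}
    (h : ∀ y, star y ⬝ᵥ x = 0 → star y ⬝ᵥ w = 0) : ∃ c : ℂ, w = c • x := by
  have hw : (WithLp.toLp 2 w : EuclideanSpace ℂ n) ∈ (ℂ ∙ WithLp.toLp 2 x)ᗮᗮ := by
    refine (Submodule.mem_orthogonal _ _).mpr fun y hy => ?_
    rw [Submodule.mem_orthogonal_singleton_iff_inner_right, inner_eq_zero_symm,
      EuclideanSpace.inner_eq_star_dotProduct, dotProduct_comm] at hy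
    rw [EuclideanSpace.inner_eq_star_dotProduct, dotProduct_comm]
    exact h y.ofLp hy
  rw [Submodule.orthogonal_orthogonal, Submodule.mem_span_singleton] at hw
  obtain ⟨c, hc⟩ := hw
  exact ⟨c, by simpa using congrArg WithLp.ofLp hc.symm⟩

lemma mul_vecMulVec_star_mul_conjTranspose (B : Matrix n n ℂ) (x : n → ℂ) :
    B * vecMulVec x (star x) * Bᴴ = vecMulVec (B *ᵥ x) (star (B *ᵥ x)) := by
  rw [mul_vecMulVec, vecMulVec_mul, star_mulVec]

variable [DecidableEq n]

lemma exists_eq_smul_one_of_forall_mulVec {B : Matrix n n ℂ}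
    (h : ∀ x, ∃ c : ℂ, B *ᵥ x = c • x) : ∃ c : ℂ, B = c • 1 := by
  obtain ⟨c, hc⟩ := (toLin' B).exists_eq_smul_id_of_forall_notLinearIndependent fun x => by
    obtain ⟨c, hc⟩ := h x
    rw [LinearIndependent.pair_iff]
    intro hind
    simpa using (hind c (-1) (by simp [hc])).2
  refine ⟨c, ?_⟩
  rw [← LinearMap.toMatrix'_toLin' B, hc]
  simp

lemma exists_eq_smul_one_of_sum_conj_eq_self {B : ι → Matrix n n ℂ}
    (h : ∀ ρ, ∑ s, B s * ρ * (B s)ᴴ = ρ) (t : ι) : ∃ c : ℂ, B t = c • 1 := by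
  refine exists_eq_smul_one_of_forall_mulVec fun x =>
    exists_eq_smul_of_forall_dotProduct_eq_zero fun y hxy =>
      dotProduct_eq_zero_of_sum_vecMulVec_eq (w := fun s => B s *ᵥ x) ?_ hxy t
  simpa only [mul_vecMulVec_star_mul_conjTranspose] using h (vecMulVec x (star x))

lemma exists_eq_smul_of_sum_conj_eq_conj {K : ι → Matrix n n ℂ} {U : Matrix n n ℂ}
    (hU : IsUnitary U) (h : ∀ ρ, ∑ s, K s * ρ * (K s)ᴴ = U * ρ * Uᴴ) (t : ι) :
    ∃ c : ℂ, K t = c • U := by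
  have hB : ∀ ρ, ∑ s, (Uᴴ * K s) * ρ * (Uᴴ * K s)ᴴ = ρ := fun ρ => calc
    _ = Uᴴ * (∑ s, K s * ρ * (K s)ᴴ) * U := by
      simp only [conjTranspose_mul, conjTranspose_conjTranspose, Matrix.mul_sum, Matrix.sum_mul,
        Matrix.mul_assoc]
    _ = ρ := by
      rw [h, ← Matrix.mul_assoc, ← Matrix.mul_assoc, hU.2, Matrix.one_mul, Matrix.mul_assoc, hU.2,
        Matrix.mul_one]
  obtain ⟨c, hc⟩ := exists_eq_smul_one_of_sum_conj_eq_self hB t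
  refine ⟨c, ?_⟩
  rw [← Matrix.one_mul (K t), ← hU.1, Matrix.mul_assoc, hc, Matrix.mul_smul, Matrix.mul_one]

lemma exists_eq_smul_one_of_smul_eq_smul_one {W : Matrix n n ℂ} {s α : ℂ} (hα : α ≠ 0)
    (h : s • W = α • 1) : ∃ c : ℂ, W = c • 1 := by
  by_cases hs : s = 0
  · have h1 : (1 : Matrix n n ℂ) = 0 :=
      (smul_eq_zero.mp (by rw [← h, hs, zero_smul])).resolve_left hα
    exact ⟨0, by rw [← Matrix.mul_one W, h1, Matrix.mul_zero, zero_smul]⟩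
  · exact ⟨s⁻¹ * α, by rw [mul_smul, ← h, smul_smul, inv_mul_cancel₀ hs, one_smul]⟩

lemma conj_eq_conj_of_conjTranspose_mul_eq_smul_one {U V : Matrix n n ℂ} {c : ℂ}
    (hU : U * Uᴴ = 1) (hV : V * Vᴴ = 1) (h : Uᴴ * V = c • 1) (ρ : Matrix n n ℂ) :
    V * ρ * Vᴴ = U * ρ * Uᴴ := by
  have hVU : V = c • U := by
    rw [← Matrix.one_mul V, ← hU, Matrix.mul_assoc, h, Matrix.mul_smul, Matrix.mul_one]
  have hc : (c * star c) • (1 : Matrix n n ℂ) = V * Vᴴ := by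
    rw [hVU, conjTranspose_smul, smul_mul_assoc, mul_smul_comm, smul_smul, hU]
  calc V * ρ * Vᴴ = ((c * star c) • 1) * (U * ρ * Uᴴ) := by
        rw [hVU]
        simp only [conjTranspose_smul, smul_mul_assoc, mul_smul_comm, smul_smul, Matrix.one_mul]
        rw [mul_comm]
    _ = U * ρ * Uᴴ := by rw [hc, hV, Matrix.one_mul]

end Matrix

section PartialTrace

variable {a b ι : Type*} [Fintype b] [Fintype ι]

/-- `(1 ⊗ ⟨β|) K (1 ⊗ |ν⟩)`: these are Kraus operators of `ρ ↦ Tr_B[K (ρ ⊗ |ν⟩⟨ν|) K*]`. -/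
def envKraus (K : Matrix (a × b) (a × b) ℂ) (β : b) (ν : b → ℂ) : Matrix a a ℂ :=
  of fun i j => ∑ d, K (i, β) (j, d) * ν d

lemma ptraceB_sum (M : ι → Matrix (a × b) (a × b) ℂ) :
    ptraceB (∑ t, M t) = ∑ t, ptraceB (M t) := by
  ext i j
  simp only [ptraceB, of_apply, Matrix.sum_apply]
  exact Finset.sum_comm

variable [Fintype a]

lemma trace_ptraceB (M : Matrix (a × b) (a × b) ℂ) : (ptraceB M).trace = M.trace := by
  simp only [trace, diag, ptraceB, of_apply, Fintype.sum_prod_type]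

lemma ptraceB_mul_kronecker_vecMulVec_mul_conjTranspose (K : Matrix (a × b) (a × b) ℂ)
    (σ : Matrix a a ℂ) (ν μ : b → ℂ) :
    ptraceB (K * (σ ⊗ₖ vecMulVec ν (star μ)) * Kᴴ)
      = ∑ β, envKraus K β ν * σ * (envKraus K β μ)ᴴ := by
  ext i j
  simp only [ptraceB, envKraus, of_apply, Matrix.sum_apply, mul_apply, conjTranspose_apply,
    Pi.star_apply, kroneckerMap_apply, vecMulVec_apply, star_sum, star_mul',
    Fintype.sum_prod_type, Finset.sum_mul, Finset.mul_sum]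
  refine Finset.sum_congr rfl fun _ _ => Finset.sum_congr rfl fun _ _ =>
    Finset.sum_congr rfl fun _ _ => Finset.sum_congr rfl fun _ _ =>
    Finset.sum_congr rfl fun _ _ => ?_
  ring

lemma ptraceB_kraus_kronecker_vecMulVec
    {N : Matrix (a × b) (a × b) ℂ →ₗ[ℂ] Matrix (a × b) (a × b) ℂ}
    {K : ι → Matrix (a × b) (a × b) ℂ} (hK : ∀ X, N X = ∑ t, K t * X * (K t)ᴴ)
    (σ : Matrix a a ℂ) (ν μ : b → ℂ) :
    ptraceB (N (σ ⊗ₖ vecMulVec ν (star μ)))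
      = ∑ p : ι × b, envKraus (K p.1) p.2 ν * σ * (envKraus (K p.1) p.2 μ)ᴴ := by
  simp only [hK, ptraceB_sum, ptraceB_mul_kronecker_vecMulVec_mul_conjTranspose,
    Fintype.sum_prod_type]

lemma trace_ptraceB_kronecker_vecMulVec
    {N : Matrix (a × b) (a × b) ℂ →ₗ[ℂ] Matrix (a × b) (a × b) ℂ}
    (hN : ∀ X, (N X).trace = X.trace) (σ : Matrix a a ℂ) (ν μ : b → ℂ) :
    (ptraceB (N (σ ⊗ₖ vecMulVec ν (star μ)))).trace = (star μ ⬝ᵥ ν) * σ.trace := by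
  rw [trace_ptraceB, hN, trace_kronecker, trace_vecMulVec, dotProduct_comm, mul_comm]

end PartialTrace

theorem stmt_1_general {mA mB : Type*} [Fintype mA] [DecidableEq mA] [Fintype mB]
    (N : Matrix (mA × mB) (mA × mB) ℂ →ₗ[ℂ] Matrix (mA × mB) (mA × mB) ℂ)
    (hN : IsCPTP N)
    (ν₁ ν₂ : mB → ℂ)
    (hover : star ν₁ ⬝ᵥ ν₂ ≠ 0)
    (ξ₁ ξ₂ : Matrix mB mB ℂ)
    (hξ₁ : ξ₁ = Matrix.vecMulVec ν₁ (star ν₁)) (hξ₂ : ξ₂ = Matrix.vecMulVec ν₂ (star ν₂))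
    (U₁ U₂ : Matrix mA mA ℂ) (hU₁ : IsUnitary U₁) (hU₂ : IsUnitary U₂)
    (hNA₁ : ∀ ρ : Matrix mA mA ℂ, ptraceB (N (ρ ⊗ₖ ξ₁)) = U₁ * ρ * U₁ᴴ)
    (hNA₂ : ∀ ρ : Matrix mA mA ℂ, ptraceB (N (ρ ⊗ₖ ξ₂)) = U₂ * ρ * U₂ᴴ) :
    ∀ ρ : Matrix mA mA ℂ, ptraceB (N (ρ ⊗ₖ ξ₁)) = ptraceB (N (ρ ⊗ₖ ξ₂)) := by
  obtain ⟨hTP, k, K, hK⟩ := hN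
  have hred := ptraceB_kraus_kronecker_vecMulVec hK
  choose c hc using exists_eq_smul_of_sum_conj_eq_conj hU₁ fun σ => by rw [← hred, ← hξ₁, hNA₁]
  choose d hd using exists_eq_smul_of_sum_conj_eq_conj hU₂ fun σ => by rw [← hred, ← hξ₂, hNA₂]
  have hcross : (∑ p, star (c p) * d p) • (U₁ᴴ * U₂) = (star ν₁ ⬝ᵥ ν₂) • 1 := by
    refine ext_iff_trace_mul_right.mpr fun σ => ?_
    simp only [smul_mul_assoc, Matrix.one_mul, trace_smul, smul_eq_mul]
    rw [← trace_ptraceB_kronecker_vecMulVec hTP σ ν₂ ν₁, hred]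
    simp only [hc, hd, conjTranspose_smul, smul_mul_assoc, mul_smul_comm, smul_smul, trace_smul,
      ← Finset.sum_smul, smul_eq_mul, trace_mul_cycle U₂]
  obtain ⟨l, hl⟩ := exists_eq_smul_one_of_smul_eq_smul_one hover hcross
  intro ρ
  rw [hNA₁, hNA₂, conj_eq_conj_of_conjTranspose_mul_eq_smul_one hU₁.1 hU₂.1 hl]

/-- Two non-orthogonal pure environment states inducing unitary channels induce the
same channel. -/
theorem stmt_1 {mA mB : Type*} [Fintype mA] [DecidableEq mA] [Fintype mB] [DecidableEq mB]
    (N : Matrix (mA × mB) (mA × mB) ℂ →ₗ[ℂ] Matrix (mA × mB) (mA × mB) ℂ)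
    (hN : IsCPTP N)
    (ν₁ ν₂ : mB → ℂ) (hν₁ : star ν₁ ⬝ᵥ ν₁ = 1) (hν₂ : star ν₂ ⬝ᵥ ν₂ = 1)
    (hover : star ν₁ ⬝ᵥ ν₂ ≠ 0)
    (ξ₁ ξ₂ : Matrix mB mB ℂ)
    (hξ₁ : ξ₁ = Matrix.vecMulVec ν₁ (star ν₁)) (hξ₂ : ξ₂ = Matrix.vecMulVec ν₂ (star ν₂))
    (U₁ U₂ : Matrix mA mA ℂ) (hU₁ : IsUnitary U₁) (hU₂ : IsUnitary U₂)
    (hNA₁ : ∀ ρ : Matrix mA mA ℂ, ptraceB (N (ρ ⊗ₖ ξ₁)) = U₁ * ρ * U₁ᴴ)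
    (hNA₂ : ∀ ρ : Matrix mA mA ℂ, ptraceB (N (ρ ⊗ₖ ξ₂)) = U₂ * ρ * U₂ᴴ) :
    ∀ ρ : Matrix mA mA ℂ, ptraceB (N (ρ ⊗ₖ ξ₁)) = ptraceB (N (ρ ⊗ₖ ξ₂)) :=
  stmt_1_general N hN ν₁ ν₂ hover ξ₁ ξ₂ hξ₁ hξ₂ U₁ U₂ hU₁ hU₂ hNA₁ hNA₂
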